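/- Let x_1 ≤ ... ≤ x_N be sorted reals, let M be an integer with 0 < 2M < N, set a = x_{M}, b = x_{N-M} (taking a = x_1 if M chosen appropriately), and define the clip function φ_{a,b}(x) = b if x > b, x if a ≤ x ≤ b, and a if x < a. Then the difference between the clipped mean (1/N)·Σ_{i=1}^N φ_{a,b}(x_i) and the trimmed mean (1/(N-2M))·Σ_{i=M+1}^{N-M} x_i is bounded in absolute value by (M/N)·|a + b - 2·TrMean| + (M/N)·(b - a), where TrMean denotes the trimmed mean. -/

import Mathlib

/-!
On a sorted sample, clipping at `a = x (M + 1)` and `b = x (N - M)` replaces exactly the `M`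
lowest values by `a` and the `M` highest by `b` and leaves the middle untouched. Hence the
winsorized sum is `M a + (N - 2M) TrMean + M b`, and the winsorized mean differs from the trimmed
mean by exactly `(M / N) (a + b - 2 TrMean)`; the term `(M / N) (b - a) ≥ 0` is slack.
-/

noncomputable def clip (a b x : ℝ) : ℝ :=
  if x > b then b else if x < a then a else x

open Finset

section Clip

variable {a b x : ℝ}

theorem clip_eq_left (hab : a ≤ b) (hx : x ≤ a) : clip a b x = a := by
  unfold clip; split_ifs <;> linarith

theorem clip_eq_self (hax : a ≤ x) (hxb : x ≤ b) : clip a b x = x := by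
  unfold clip; split_ifs <;> linarith

theorem clip_eq_right (hab : a ≤ b) (hx : b ≤ x) : clip a b x = b := by
  unfold clip; split_ifs <;> linarith

end Clip

theorem sum_Icc_clip_of_monotoneOn {N M : ℕ} {x : ℕ → ℝ} (hx : MonotoneOn x (Set.Icc 1 N))
    (hM : 2 * M < N) :
    ∑ i ∈ Icc 1 N, clip (x (M + 1)) (x (N - M)) (x i) =
      M * x (M + 1) + ∑ i ∈ Icc (M + 1) (N - M), x i + M * x (N - M) := by
  have hab : x (M + 1) ≤ x (N - M) := hx ⟨by omega, by omega⟩ ⟨by omega, by omega⟩ (by omega)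
  have hlow : ∀ i ∈ Ioc 0 M, clip (x (M + 1)) (x (N - M)) (x i) = x (M + 1) := by
    intro i hi
    rw [mem_Ioc] at hi
    exact clip_eq_left hab (hx ⟨by omega, by omega⟩ ⟨by omega, by omega⟩ (by omega))
  have hmid : ∀ i ∈ Ioc M (N - M), clip (x (M + 1)) (x (N - M)) (x i) = x i := by
    intro i hi
    rw [mem_Ioc] at hi
    exact clip_eq_self (hx ⟨by omega, by omega⟩ ⟨by omega, by omega⟩ (by omega))
      (hx ⟨by omega, by omega⟩ ⟨by omega, by omega⟩ hi.2)
  have hhigh : ∀ i ∈ Ioc (N - M) N, clip (x (M + 1)) (x (N - M)) (x i) = x (N - M) := by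
    intro i hi
    rw [mem_Ioc] at hi
    exact clip_eq_right hab (hx ⟨by omega, by omega⟩ ⟨by omega, by omega⟩ (by omega))
  rw [Icc_add_one_left_eq_Ioc, show Icc 1 N = Ioc 0 N from Icc_add_one_left_eq_Ioc 0 N,
    ← sum_Ioc_consecutive _ (Nat.zero_le (N - M)) (by omega : N - M ≤ N),
    ← sum_Ioc_consecutive _ (Nat.zero_le M) (by omega : M ≤ N - M),
    sum_congr rfl hlow, sum_congr rfl hmid, sum_congr rfl hhigh,
    sum_const, sum_const, Nat.card_Ioc, Nat.card_Ioc, nsmul_eq_mul, nsmul_eq_mul,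
    Nat.sub_zero, Nat.sub_sub_self (by omega : M ≤ N)]

theorem winsorized_vs_trimmed_general
    (N M : ℕ) (x : ℕ → ℝ)
    (hsorted : ∀ i j, 1 ≤ i → i ≤ j → j ≤ N → x i ≤ x j)
    (hM : 2 * M < N)
    (a b TrMean : ℝ) (ha : a = x (M + 1)) (hb : b = x (N - M))
    (hTr : TrMean = (1 / ((N : ℝ) - 2 * M)) * ∑ i ∈ Finset.Icc (M + 1) (N - M), x i) :
    |(1 / (N : ℝ)) * ∑ i ∈ Finset.Icc 1 N, clip a b (x i) - TrMean| ≤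
      ((M : ℝ) / N) * |a + b - 2 * TrMean| + ((M : ℝ) / N) * (b - a) := by
  have hmono : MonotoneOn x (Set.Icc 1 N) := fun i hi j hj hij => hsorted i j hi.1 hij hj.2
  have hab : a ≤ b := ha ▸ hb ▸ hmono ⟨by omega, by omega⟩ ⟨by omega, by omega⟩ (by omega)
  have hN : (N : ℝ) ≠ 0 := Nat.cast_ne_zero.mpr (by omega)
  have htrim : ∑ i ∈ Icc (M + 1) (N - M), x i = ((N : ℝ) - 2 * M) * TrMean := by
    have : (2 * M : ℝ) < N := by exact_mod_cast hM
    rw [hTr]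
    field_simp [(by linarith : (N : ℝ) - 2 * M ≠ 0)]
  have hmean : (1 / (N : ℝ)) * ∑ i ∈ Icc 1 N, clip a b (x i) - TrMean =
      (M / N) * (a + b - 2 * TrMean) := by
    rw [ha, hb, sum_Icc_clip_of_monotoneOn hmono hM, ← ha, ← hb, htrim]
    field_simp
    ring
  rw [hmean, abs_mul, abs_of_nonneg (by positivity)]
  have hwidth : 0 ≤ (M / N : ℝ) * (b - a) := mul_nonneg (by positivity) (sub_nonneg.2 hab)
  linarith

theorem winsorized_vs_trimmed
    (N M : ℕ) (x : ℕ → ℝ)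
    (hsorted : ∀ i j, 1 ≤ i → i ≤ j → j ≤ N → x i ≤ x j)
    (hM0 : 0 < M) (hM : 2 * M < N)
    (a b TrMean : ℝ) (ha : a = x (M + 1)) (hb : b = x (N - M))
    (hTr : TrMean = (1 / ((N : ℝ) - 2 * M)) * ∑ i ∈ Finset.Icc (M + 1) (N - M), x i) :
    |(1 / (N : ℝ)) * ∑ i ∈ Finset.Icc 1 N, clip a b (x i) - TrMean| ≤
      ((M : ℝ) / N) * |a + b - 2 * TrMean| + ((M : ℝ) / N) * (b - a) :=
  winsorized_vs_trimmed_general N M x hsorted hM a b TrMean ha hb hTr
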